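/- Let (a₁,b₁), (a₂,b₂), (a₃,b₃) be pairs of natural numbers satisfying: (i) aᵢ+aⱼ and bᵢ+bⱼ are even for all i ≠ j; (ii) at most one index has (aᵢ,bᵢ) = (0,0); (iii) each pair is admissible for 𝔽₄, i.e. aᵢ = 0, or bᵢ ≥ 4aᵢ, or (aᵢ,bᵢ) = (1,0), or (aᵢ ≥ 2 and bᵢ = 4(aᵢ−1)); (iv) at most one index is C-containing, i.e. of the form (1,0) or (aᵢ ≥ 2, bᵢ = 4(aᵢ−1), bᵢ < 4aᵢ); (v) for every i (with {i,j,k} = {1,2,3}), either (aⱼ+aₖ = 4 and bⱼ+bₖ = 12), or aⱼ+aₖ ≤ 2, or bⱼ+bₖ ≤ 10; and (vi) there exists i with aⱼ+aₖ = 4 and bⱼ+bₖ = 12. Then, up to a permutation of the indices, the triple is one of: ((3,8),(1,4),(1,4)); ((2,4),(2,8),(0,2k)) for some k ≥ 0. -/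
import Mathlib


/-- A class `aC + bF` on 𝔽₄ admits a smooth reduced effective member. -/
def F4Admissible (a b : ℕ) : Prop :=
  a = 0 ∨ 4 * a ≤ b ∨ (a = 1 ∧ b = 0) ∨ (2 ≤ a ∧ b = 4 * (a - 1))

/-- The class `aC + bF` on 𝔽₄ contains the negative section `C`. -/
def F4CContaining (a b : ℕ) : Prop :=
  (a = 1 ∧ b = 0) ∨ (2 ≤ a ∧ b = 4 * (a - 1) ∧ b < 4 * a)

lemma ms_swap12 {α} (x y z : α) : ({x,y,z} : Multiset α) = {y,x,z} := by
  change x ::ₘ y ::ₘ {z} = y ::ₘ x ::ₘ {z}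
  rw [Multiset.cons_swap]

lemma ms_swap23 {α} (x y z : α) : ({x,y,z} : Multiset α) = {x,z,y} := by
  change x ::ₘ y ::ₘ z ::ₘ 0 = x ::ₘ z ::ₘ y ::ₘ 0
  rw [Multiset.cons_swap y z]

lemma pairClass (a b c d : ℕ) (h1 : F4Admissible a b) (h2 : F4Admissible c d)
    (h4 : a + c = 4) (h12 : b + d = 12) :
    (a=0∧b=0∧c=4∧d=12)∨(a=4∧b=12∧c=0∧d=0)∨(a=1∧b=0∧c=3∧d=12)∨(a=3∧b=12∧c=1∧d=0)∨
    (a=1∧b=4∧c=3∧d=8)∨(a=3∧b=8∧c=1∧d=4)∨(a=2∧b=4∧c=2∧d=8)∨(a=2∧b=8∧c=2∧d=4) := by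
  simp only [F4Admissible] at h1 h2
  have hb : b = 0 ∨ b = 4 ∨ b = 8 ∨ b = 12 := by omega
  rcases hb with rfl|rfl|rfl|rfl
  · have : a = 0 ∨ a = 1 := by omega
    rcases this with rfl|rfl
    · obtain ⟨rfl, rfl⟩ : c = 4 ∧ d = 12 := by omega
      decide
    · obtain ⟨rfl, rfl⟩ : c = 3 ∧ d = 12 := by omega
      decide
  · have : a = 1 ∨ a = 2 := by omega
    rcases this with rfl|rfl
    · obtain ⟨rfl, rfl⟩ : c = 3 ∧ d = 8 := by omega
      decide
    · obtain ⟨rfl, rfl⟩ : c = 2 ∧ d = 8 := by omega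
      decide
  · have : a = 2 ∨ a = 3 := by omega
    rcases this with rfl|rfl
    · obtain ⟨rfl, rfl⟩ : c = 2 ∧ d = 4 := by omega
      decide
    · obtain ⟨rfl, rfl⟩ : c = 1 ∧ d = 4 := by omega
      decide
  · have : a = 3 ∨ a = 4 := by omega
    rcases this with rfl|rfl
    · obtain ⟨rfl, rfl⟩ : c = 1 ∧ d = 0 := by omega
      decide
    · obtain ⟨rfl, rfl⟩ : c = 0 ∧ d = 0 := by omega
      decide

set_option maxHeartbeats 4000000 in
set_option maxHeartbeats 4000000 in
lemma master (x₁ y₁ x₂ y₂ x₃ y₃ : ℕ)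
    (hEa : Even (x₁ + x₃)) (hEb : Even (y₁ + y₃))
    (hz13 : ¬(x₁ = 0 ∧ y₁ = 0 ∧ x₃ = 0 ∧ y₃ = 0))
    (hz23 : ¬(x₂ = 0 ∧ y₂ = 0 ∧ x₃ = 0 ∧ y₃ = 0))
    (had1 : F4Admissible x₁ y₁) (had2 : F4Admissible x₂ y₂) (had3 : F4Admissible x₃ y₃)
    (hC13 : ¬(F4CContaining x₁ y₁ ∧ F4CContaining x₃ y₃))
    (hC23 : ¬(F4CContaining x₂ y₂ ∧ F4CContaining x₃ y₃))
    (hY13 : (x₁ + x₃ = 4 ∧ y₁ + y₃ = 12) ∨ x₁ + x₃ ≤ 2 ∨ y₁ + y₃ ≤ 10)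
    (hY23 : (x₂ + x₃ = 4 ∧ y₂ + y₃ = 12) ∨ x₂ + x₃ ≤ 2 ∨ y₂ + y₃ ≤ 10)
    (h4 : x₁ + x₂ = 4) (h12 : y₁ + y₂ = 12) :
    (x₃ = 1 ∧ y₃ = 4 ∧ ((x₁=1∧y₁=4∧x₂=3∧y₂=8) ∨ (x₁=3∧y₁=8∧x₂=1∧y₂=4))) ∨
    (x₃ = 0 ∧ y₃ % 2 = 0 ∧ ((x₁=2∧y₁=4∧x₂=2∧y₂=8) ∨ (x₁=2∧y₁=8∧x₂=2∧y₂=4))) := by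
  simp only [F4Admissible, F4CContaining, Nat.even_iff] at hEa hEb had3 hC13 hC23
  rcases pairClass x₁ y₁ x₂ y₂ had1 had2 h4 h12 with
    ⟨rfl,rfl,rfl,rfl⟩|⟨rfl,rfl,rfl,rfl⟩|⟨rfl,rfl,rfl,rfl⟩|⟨rfl,rfl,rfl,rfl⟩|
    ⟨rfl,rfl,rfl,rfl⟩|⟨rfl,rfl,rfl,rfl⟩|⟨rfl,rfl,rfl,rfl⟩|⟨rfl,rfl,rfl,rfl⟩
  · exfalso; clear hEa hEb hz23 had1 had2 had3 hC13 hC23 hY13 h4 h12; omega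
  · exfalso; clear hEa hEb hz13 had1 had2 had3 hC13 hC23 hY23 h4 h12; omega
  · exfalso; clear hEa hEb hz13 hz23 had1 had2 had3 hC23 hY13 h4 h12; omega
  · exfalso; clear hEa hEb hz13 hz23 had1 had2 had3 hC13 hY23 h4 h12; omega
  · obtain ⟨rfl, rfl⟩ : x₃ = 1 ∧ y₃ = 4 := by
      clear hz13 hz23 had1 had2 hC13 hY13 h4 h12; omega
    exact Or.inl ⟨rfl, rfl, Or.inl ⟨rfl,rfl,rfl,rfl⟩⟩
  · obtain ⟨rfl, rfl⟩ : x₃ = 1 ∧ y₃ = 4 := by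
      clear hz13 hz23 had1 had2 hC23 hY23 h4 h12; omega
    exact Or.inl ⟨rfl, rfl, Or.inr ⟨rfl,rfl,rfl,rfl⟩⟩
  · obtain ⟨rfl, he⟩ : x₃ = 0 ∧ y₃ % 2 = 0 := by
      clear hz13 hz23 had1 had2 h4 h12; omega
    exact Or.inr ⟨rfl, he, Or.inl ⟨rfl,rfl,rfl,rfl⟩⟩
  · obtain ⟨rfl, he⟩ : x₃ = 0 ∧ y₃ % 2 = 0 := by
      clear hz13 hz23 had1 had2 h4 h12; omega
    exact Or.inr ⟨rfl, he, Or.inr ⟨rfl,rfl,rfl,rfl⟩⟩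

lemma ms_rot {α} (x y z : α) : ({x,y,z} : Multiset α) = {y,z,x} :=
  (ms_swap12 x y z).trans (ms_swap23 y x z)

/-- Arithmetic core of the `n = 4` case of Theorem 6.4 (Table 10):
classification of smooth bidouble covers of 𝔽₄ whose intermediate quotients
are each a K3 surface or have `p_g = 0`, with at least one a K3 surface. -/
theorem bidouble_cover_F4_classification
    (a₁ b₁ a₂ b₂ a₃ b₃ : ℕ)
    (hEa₁₂ : Even (a₁ + a₂)) (hEb₁₂ : Even (b₁ + b₂))
    (hEa₁₃ : Even (a₁ + a₃)) (hEb₁₃ : Even (b₁ + b₃))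
    (hEa₂₃ : Even (a₂ + a₃)) (hEb₂₃ : Even (b₂ + b₃))
    (hz₁₂ : ¬(a₁ = 0 ∧ b₁ = 0 ∧ a₂ = 0 ∧ b₂ = 0))
    (hz₁₃ : ¬(a₁ = 0 ∧ b₁ = 0 ∧ a₃ = 0 ∧ b₃ = 0))
    (hz₂₃ : ¬(a₂ = 0 ∧ b₂ = 0 ∧ a₃ = 0 ∧ b₃ = 0))
    (had₁ : F4Admissible a₁ b₁) (had₂ : F4Admissible a₂ b₂) (had₃ : F4Admissible a₃ b₃)
    (hC₁₂ : ¬(F4CContaining a₁ b₁ ∧ F4CContaining a₂ b₂))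
    (hC₁₃ : ¬(F4CContaining a₁ b₁ ∧ F4CContaining a₃ b₃))
    (hC₂₃ : ¬(F4CContaining a₂ b₂ ∧ F4CContaining a₃ b₃))
    (hY₁ : (a₂ + a₃ = 4 ∧ b₂ + b₃ = 12) ∨ a₂ + a₃ ≤ 2 ∨ b₂ + b₃ ≤ 10)
    (hY₂ : (a₁ + a₃ = 4 ∧ b₁ + b₃ = 12) ∨ a₁ + a₃ ≤ 2 ∨ b₁ + b₃ ≤ 10)
    (hY₃ : (a₁ + a₂ = 4 ∧ b₁ + b₂ = 12) ∨ a₁ + a₂ ≤ 2 ∨ b₁ + b₂ ≤ 10)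
    (hK3 : (a₂ + a₃ = 4 ∧ b₂ + b₃ = 12) ∨ (a₁ + a₃ = 4 ∧ b₁ + b₃ = 12) ∨
      (a₁ + a₂ = 4 ∧ b₁ + b₂ = 12)) :
    ({(a₁,b₁),(a₂,b₂),(a₃,b₃)} : Multiset (ℕ × ℕ)) = {(3,8),(1,4),(1,4)} ∨
    (∃ k : ℕ,
      ({(a₁,b₁),(a₂,b₂),(a₃,b₃)} : Multiset (ℕ × ℕ)) = {(2,4),(2,8),(0,2*k)}) := by
  rcases hK3 with ⟨h4, h12⟩ | ⟨h4, h12⟩ | ⟨h4, h12⟩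
  · -- K3 pair is (D₂, D₃), third is D₁
    have hm := master a₂ b₂ a₃ b₃ a₁ b₁
      (by rw [Nat.add_comm]; exact hEa₁₂) (by rw [Nat.add_comm]; exact hEb₁₂)
      (fun ⟨p,q,r,s⟩ => hz₁₂ ⟨r,s,p,q⟩) (fun ⟨p,q,r,s⟩ => hz₁₃ ⟨r,s,p,q⟩)
      had₂ had₃ had₁ (fun ⟨p,q⟩ => hC₁₂ ⟨q,p⟩) (fun ⟨p,q⟩ => hC₁₃ ⟨q,p⟩)
      (by rw [Nat.add_comm a₂ a₁, Nat.add_comm b₂ b₁]; exact hY₃)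
      (by rw [Nat.add_comm a₃ a₁, Nat.add_comm b₃ b₁]; exact hY₂)
      h4 h12
    rcases hm with ⟨rfl, rfl, ⟨rfl,rfl,rfl,rfl⟩|⟨rfl,rfl,rfl,rfl⟩⟩ |
        ⟨rfl, he, ⟨rfl,rfl,rfl,rfl⟩|⟨rfl,rfl,rfl,rfl⟩⟩
    · left; decide
    · left; decide
    · right
      exact ⟨b₁/2, by rw [show 2*(b₁/2) = b₁ by omega, ms_rot (0,b₁) (2,4) (2,8)]⟩
    · right
      refine ⟨b₁/2, ?_⟩
      rw [show 2*(b₁/2) = b₁ by omega, ms_rot (0,b₁) (2,8) (2,4),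
        ms_swap12 (2,8) (2,4) (0,b₁)]
  · -- K3 pair is (D₁, D₃), third is D₂
    have hm := master a₁ b₁ a₃ b₃ a₂ b₂
      hEa₁₂ hEb₁₂ hz₁₂ (fun ⟨p,q,r,s⟩ => hz₂₃ ⟨r,s,p,q⟩)
      had₁ had₃ had₂ hC₁₂ (fun ⟨p,q⟩ => hC₂₃ ⟨q,p⟩)
      hY₃ (by rw [Nat.add_comm a₃ a₂, Nat.add_comm b₃ b₂]; exact hY₁)
      h4 h12
    rcases hm with ⟨rfl, rfl, ⟨rfl,rfl,rfl,rfl⟩|⟨rfl,rfl,rfl,rfl⟩⟩ |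
        ⟨rfl, he, ⟨rfl,rfl,rfl,rfl⟩|⟨rfl,rfl,rfl,rfl⟩⟩
    · left; decide
    · left; decide
    · right
      exact ⟨b₂/2, by rw [show 2*(b₂/2) = b₂ by omega, ms_swap23 (2,4) (0,b₂) (2,8)]⟩
    · right
      refine ⟨b₂/2, ?_⟩
      rw [show 2*(b₂/2) = b₂ by omega, ms_swap23 (2,8) (0,b₂) (2,4),
        ms_swap12 (2,8) (2,4) (0,b₂)]
  · -- K3 pair is (D₁, D₂), third is D₃
    have hm := master a₁ b₁ a₂ b₂ a₃ b₃
      hEa₁₃ hEb₁₃ hz₁₃ hz₂₃ had₁ had₂ had₃ hC₁₃ hC₂₃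
      hY₂ hY₁ h4 h12
    rcases hm with ⟨rfl, rfl, ⟨rfl,rfl,rfl,rfl⟩|⟨rfl,rfl,rfl,rfl⟩⟩ |
        ⟨rfl, he, ⟨rfl,rfl,rfl,rfl⟩|⟨rfl,rfl,rfl,rfl⟩⟩
    · left; decide
    · left; decide
    · right
      exact ⟨b₃/2, by rw [show 2*(b₃/2) = b₃ by omega]⟩
    · right
      exact ⟨b₃/2, by rw [show 2*(b₃/2) = b₃ by omega, ms_swap12 (2,8) (2,4) (0,b₃)]⟩
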